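/- Let p ≥ q ≥ 1 and N ≥ 3 be integers, n = p+q, and R = artanh(√(ν_n(N))). If γ ∈ Γ_G(N) can be written as γ = k₁ · exp(H_t) · k₂ · exp(H_l)⁻¹ · k₃ with k₁, k₂, k₃ ∈ K = S(U(p)×U(q)) and t, l ∈ T_R, then γ = I_n. Equivalently, K exp(S_R) K exp(−S_R) K ∩ Γ_G(N) = {I_n}, where S_R = {H_t : t ∈ T_R}. -/

import Mathlib

open Matrix

namespace stmt7

/-- The inverse hyperbolic tangent on `(−1,1)`: `artanh x = (1/2) log((1+x)/(1−x))`. -/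
noncomputable def artanh (x : ℝ) : ℝ := (1 / 2) * Real.log ((1 + x) / (1 - x))

/-- `ν_n(N) = (√(1 + n/(2N²)) + √(n/(2N²)))^{−2}`. -/
noncomputable def nu (n N : ℝ) : ℝ :=
  (Real.sqrt (1 + n / (2 * N ^ 2)) + Real.sqrt (n / (2 * N ^ 2)))⁻¹ ^ 2

/-- The matrix `I_{p,q} = diag(I_p, −I_q)`. -/
def Ipq (p q : ℕ) : Matrix (Fin p ⊕ Fin q) (Fin p ⊕ Fin q) ℂ :=
  Matrix.fromBlocks 1 0 0 (-1)

/-- Membership in `Γ_G(N) = SU(p,q) ∩ (I_n + M_n(N·ℤ[i]))`. -/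
def inGamma (p q N : ℕ) (γ : Matrix (Fin p ⊕ Fin q) (Fin p ⊕ Fin q) ℂ) : Prop :=
  γ.det = 1 ∧ γᴴ * Ipq p q * γ = Ipq p q ∧
    ∀ i j, ∃ a b : ℤ, γ i j - (1 : Matrix (Fin p ⊕ Fin q) (Fin p ⊕ Fin q) ℂ) i j =
      (N : ℂ) * ((a : ℂ) + (b : ℂ) * Complex.I)

/-- Membership in `K = S(U(p)×U(q))`. -/
def inK (p q : ℕ) (k : Matrix (Fin p ⊕ Fin q) (Fin p ⊕ Fin q) ℂ) : Prop :=
  ∃ A ∈ Matrix.unitaryGroup (Fin p) ℂ, ∃ D ∈ Matrix.unitaryGroup (Fin q) ℂ,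
    A.det * D.det = 1 ∧ k = Matrix.fromBlocks A 0 0 D

/-- The matrix `H_t = [[0, t_{p×q}],[t_{q×p}, 0]]` for `t ∈ ℝ^q`. -/
noncomputable def Ht (p q : ℕ) (t : Fin q → ℝ) :
    Matrix (Fin p ⊕ Fin q) (Fin p ⊕ Fin q) ℂ :=
  Matrix.fromBlocks 0
    (Matrix.of fun (i : Fin p) (j : Fin q) => if (i : ℕ) = (j : ℕ) then (t j : ℂ) else 0)
    (Matrix.of fun (i : Fin q) (j : Fin p) => if (i : ℕ) = (j : ℕ) then (t i : ℂ) else 0) 0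

/-- `t ∈ T_R`, i.e. `R > t₁ > t₂ > ⋯ > t_q > 0`. -/
def inT (q : ℕ) (R : ℝ) (t : Fin q → ℝ) : Prop :=
  (∀ i j : Fin q, i < j → t j < t i) ∧ (∀ i, 0 < t i) ∧ (∀ i, t i < R)

end stmt7


namespace aux

lemma sum_fin_ite {M : Type*} [AddCommMonoid M] {m : ℕ} (k : ℕ) (f : Fin m → M) :
    (∑ j : Fin m, if k = (j : ℕ) then f j else 0) = if h : k < m then f ⟨k, h⟩ else 0 := by
  by_cases h : k < m
  · rw [dif_pos h, Finset.sum_eq_single ⟨k, h⟩]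
    · simp
    · intro j _ hj
      rw [if_neg]
      intro hk; exact hj (Fin.ext hk.symm)
    · simp
  · rw [dif_neg h, Finset.sum_eq_zero]
    intro j _
    rw [if_neg]
    have := j.isLt
    omega

lemma sum_fin_dite {M : Type*} [AddCommMonoid M] {a b : ℕ} (hab : a ≤ b) (f : Fin a → M) :
    (∑ i : Fin b, if h : (i : ℕ) < a then f ⟨(i : ℕ), h⟩ else 0) = ∑ j : Fin a, f j := by
  set g : ℕ → M := fun s => if hs : s < a then f ⟨s, hs⟩ else 0 with hg
  have h1 : (∑ i : Fin b, if h : (i : ℕ) < a then f ⟨(i : ℕ), h⟩ else 0)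
      = ∑ i : Fin b, g (i : ℕ) := Finset.sum_congr rfl (fun i _ => rfl)
  have h2 : (∑ j : Fin a, f j) = ∑ j : Fin a, g (j : ℕ) :=
    Finset.sum_congr rfl (fun j _ => by simp [hg, j.isLt])
  rw [h1, h2, Fin.sum_univ_eq_sum_range, Fin.sum_univ_eq_sum_range]
  exact (Finset.sum_subset (Finset.range_subset_range.2 hab) fun s _ hns => by
    simp only [Finset.mem_range, not_lt] at hns
    exact dif_neg (by omega)).symm

lemma cosh_val {n N : ℝ} (hn : 2 ≤ n) (hN : 3 ≤ N) (R : ℝ)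
    (hR : R = stmt7.artanh (Real.sqrt (stmt7.nu n N))) :
    Real.exp (4 * R) + Real.exp (-(4 * R)) = 2 + 8 * N ^ 2 / n := by
  have hn0 : 0 < n := by linarith
  have hN0 : 0 < N := by linarith
  set x : ℝ := n / (2 * N ^ 2) with hxdef
  have hx0 : 0 < x := by positivity
  set u : ℝ := Real.sqrt (x ^ 2 + x) with hudef
  have hu0 : 0 ≤ u := Real.sqrt_nonneg _
  have hu : u ^ 2 = x ^ 2 + x := Real.sq_sqrt (by positivity)
  set s : ℝ := (Real.sqrt (1 + x) + Real.sqrt x)⁻¹ with hsdef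
  have hd1 : (1 : ℝ) ≤ Real.sqrt (1 + x) := by
    have h := Real.sqrt_le_sqrt (show (1:ℝ) ≤ 1 + x by linarith)
    rwa [Real.sqrt_one] at h
  have hdenpos : 0 < Real.sqrt (1 + x) + Real.sqrt x := by
    have := Real.sqrt_nonneg x; linarith
  have hs0 : 0 < s := by positivity
  have hs1 : s < 1 := by
    have hx' : 0 < Real.sqrt x := Real.sqrt_pos.2 hx0
    have hgt : 1 < Real.sqrt (1 + x) + Real.sqrt x := by linarith
    rw [hsdef]
    exact inv_lt_one_of_one_lt₀ hgt
  have hsq : Real.sqrt (stmt7.nu n N) = s := by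
    rw [stmt7.nu, ← hxdef, ← hsdef, Real.sqrt_sq hs0.le]
  have hA : (Real.sqrt (1 + x) + Real.sqrt x) ^ 2 = 1 + 2 * x + 2 * u := by
    have h1 : Real.sqrt (1 + x) ^ 2 = 1 + x := Real.sq_sqrt (by linarith)
    have h2 : Real.sqrt x ^ 2 = x := Real.sq_sqrt hx0.le
    have h3 : Real.sqrt (1 + x) * Real.sqrt x = u := by
      rw [← Real.sqrt_mul (by linarith), hudef]
      ring_nf
    nlinarith [h1, h2, h3]
  have hs2 : s ^ 2 * (1 + 2 * x + 2 * u) = 1 := by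
    rw [← hA, hsdef, inv_pow]
    exact inv_mul_cancel₀ (by positivity)
  have key : (1 - s ^ 2) ^ 2 = 4 * s ^ 2 * x := by
    have hw : 1 - s ^ 2 = s ^ 2 * (2 * x + 2 * u) := by linear_combination - hs2
    have e2 : s ^ 2 * ((x + u) ^ 2) = x := by linear_combination x * hs2 + s ^ 2 * hu
    linear_combination ((1 - s ^ 2) + s ^ 2 * (2 * x + 2 * u)) * hw + 4 * s ^ 2 * e2
  have h1s : (0:ℝ) < 1 - s := by linarith
  have h1s' : (0:ℝ) < 1 + s := by linarith
  have hexp2 : Real.exp (2 * R) = (1 + s) / (1 - s) := by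
    rw [hR, hsq, stmt7.artanh]
    rw [show (2 : ℝ) * (1 / 2 * Real.log ((1 + s) / (1 - s))) = Real.log ((1+s)/(1-s)) by ring]
    exact Real.exp_log (by positivity)
  have hexp4 : Real.exp (4 * R) = ((1 + s) / (1 - s)) ^ 2 := by
    rw [show (4:ℝ) * R = 2 * R + 2 * R by ring, Real.exp_add, hexp2]; ring
  have hexp4' : Real.exp (-(4 * R)) = (((1 + s) / (1 - s)) ^ 2)⁻¹ := by
    rw [Real.exp_neg, hexp4]
  rw [hexp4, hexp4']
  have hx8 : 8 * N ^ 2 / n = 4 / x := by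
    rw [hxdef]; field_simp; ring
  rw [hx8]
  have hnz1 : (1 - s) ≠ 0 := ne_of_gt h1s
  have hnz2 : (1 + s) ≠ 0 := ne_of_gt h1s'
  have hxne : x ≠ 0 := ne_of_gt hx0
  field_simp
  linear_combination (-4)*key


lemma Ht_isHermitian (p q : ℕ) (t : Fin q → ℝ) : (stmt7.Ht p q t).IsHermitian := by
  rw [Matrix.IsHermitian]
  ext u v
  rcases u with i | i <;> rcases v with j | j <;>
      simp only [stmt7.Ht, Matrix.conjTranspose_apply, Matrix.fromBlocks_apply₁₁,
        Matrix.fromBlocks_apply₁₂, Matrix.fromBlocks_apply₂₁, Matrix.fromBlocks_apply₂₂,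
        Matrix.of_apply, Matrix.zero_apply, star_zero]
  · by_cases h : (i : ℕ) = (j : ℕ)
    · rw [if_pos h.symm, if_pos h, Complex.star_def, Complex.conj_ofReal]
    · rw [if_neg (fun hh => h hh.symm), if_neg h, star_zero]
  · by_cases h : (i : ℕ) = (j : ℕ)
    · rw [if_pos h.symm, if_pos h, Complex.star_def, Complex.conj_ofReal]
    · rw [if_neg (fun hh => h hh.symm), if_neg h, star_zero]

lemma Ht_decomp (p q : ℕ) (hpq : q ≤ p) {R B : ℝ} (t : Fin q → ℝ)
    (ht0 : ∀ i, 0 ≤ t i) (htB : ∀ i, t i ≤ B) (hB0 : 0 ≤ B) (hBR : B < R) :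
    ∃ (U : Matrix (Fin p ⊕ Fin q) (Fin p ⊕ Fin q) ℂ) (a : (Fin p ⊕ Fin q) → ℝ),
      U ∈ Matrix.unitaryGroup (Fin p ⊕ Fin q) ℂ ∧ (∀ i, |a i| < R) ∧
      NormedSpace.exp (stmt7.Ht p q t)
        = U * Matrix.diagonal (fun i => (Real.exp (a i) : ℂ)) * Uᴴ := by
  classical
  have hH := Ht_isHermitian p q t
  set U : Matrix (Fin p ⊕ Fin q) (Fin p ⊕ Fin q) ℂ := (hH.eigenvectorUnitary : Matrix (Fin p ⊕ Fin q) (Fin p ⊕ Fin q) ℂ)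
    with hUdef
  set a : (Fin p ⊕ Fin q) → ℝ := hH.eigenvalues with hadef
  have hUmem : U ∈ Matrix.unitaryGroup (Fin p ⊕ Fin q) ℂ := hH.eigenvectorUnitary.2
  have hUU : U * star U = 1 := Matrix.mem_unitaryGroup_iff.mp hUmem
  have hUU' : star U * U = 1 := Matrix.mem_unitaryGroup_iff'.mp hUmem
  have hspec : stmt7.Ht p q t = U * Matrix.diagonal (RCLike.ofReal ∘ a) * star U :=
    hH.spectral_theorem
  refine ⟨U, a, hUmem, ?_, ?_⟩
  · -- eigenvalue bound
    intro i
    set v : (Fin p ⊕ Fin q) → ℂ := fun u => U u i with hvdef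
    have hcolC : (∑ u, (starRingEnd ℂ) (v u) * v u) = 1 := by
      have h := Matrix.ext_iff.2 hUU' i i
      rw [Matrix.mul_apply] at h
      simpa [Matrix.star_eq_conjTranspose, Matrix.conjTranspose_apply, hvdef] using h
    have hnorm : (∑ u, Complex.normSq (v u)) = 1 := by
      have : (((∑ u, Complex.normSq (v u)) : ℝ) : ℂ) = 1 := by
        rw [← hcolC]
        push_cast
        exact Finset.sum_congr rfl fun u _ => by rw [mul_comm, Complex.mul_conj]
      exact_mod_cast this
    have hHU : stmt7.Ht p q t * U = U * Matrix.diagonal (RCLike.ofReal ∘ a) := by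
      conv_lhs => rw [hspec]
      rw [Matrix.mul_assoc, hUU', Matrix.mul_one]
    have heig : ∀ u, (∑ w, stmt7.Ht p q t u w * v w) = v u * ((a i : ℝ) : ℂ) := by
      intro u
      have h := Matrix.ext_iff.2 hHU u i
      rw [Matrix.mul_apply, Matrix.mul_diagonal] at h
      simpa [hvdef] using h
    have hval : ((a i : ℝ) : ℂ) = ∑ u, (starRingEnd ℂ) (v u) * (∑ w, stmt7.Ht p q t u w * v w) := by
      have : (∑ u, (starRingEnd ℂ) (v u) * (∑ w, stmt7.Ht p q t u w * v w))
          = (∑ u, (starRingEnd ℂ) (v u) * v u) * ((a i : ℝ) : ℂ) := by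
        rw [Finset.sum_mul]
        exact Finset.sum_congr rfl fun u _ => by rw [heig u, mul_assoc]
      rw [this, hcolC, one_mul]
    have habs : |a i| ≤ ∑ u, norm ((starRingEnd ℂ) (v u) * (∑ w, stmt7.Ht p q t u w * v w)) := by
      rw [← Real.norm_eq_abs, ← Complex.norm_real, hval]
      exact norm_sum_le _ _
    -- compute the inner sums
    have hSl : ∀ i' : Fin p, (∑ w, stmt7.Ht p q t (Sum.inl i') w * v w)
        = (if h : (i' : ℕ) < q then (t ⟨(i' : ℕ), h⟩ : ℂ) * v (Sum.inr ⟨(i' : ℕ), h⟩) else 0) := by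
      intro i'
      rw [Fintype.sum_sum_type]
      have h0 : (∑ j : Fin p, stmt7.Ht p q t (Sum.inl i') (Sum.inl j) * v (Sum.inl j)) = 0 :=
        Finset.sum_eq_zero fun j _ => by
          simp [stmt7.Ht, Matrix.fromBlocks_apply₁₁]
      rw [h0, zero_add]
      have h1 : (∑ j : Fin q, stmt7.Ht p q t (Sum.inl i') (Sum.inr j) * v (Sum.inr j))
          = ∑ j : Fin q, (if (i' : ℕ) = (j : ℕ) then (t j : ℂ) * v (Sum.inr j) else 0) :=
        Finset.sum_congr rfl fun j _ => by
          simp only [stmt7.Ht, Matrix.fromBlocks_apply₁₂, Matrix.of_apply, ite_mul, zero_mul]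
      rw [h1, sum_fin_ite]
    have hSr : ∀ r : Fin q, (∑ w, stmt7.Ht p q t (Sum.inr r) w * v w)
        = (t r : ℂ) * v (Sum.inl ⟨(r : ℕ), lt_of_lt_of_le r.isLt hpq⟩) := by
      intro r
      rw [Fintype.sum_sum_type]
      have h0 : (∑ j : Fin q, stmt7.Ht p q t (Sum.inr r) (Sum.inr j) * v (Sum.inr j)) = 0 :=
        Finset.sum_eq_zero fun j _ => by
          simp [stmt7.Ht, Matrix.fromBlocks_apply₂₂]
      rw [h0, add_zero]
      have h1 : (∑ j : Fin p, stmt7.Ht p q t (Sum.inr r) (Sum.inl j) * v (Sum.inl j))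
          = ∑ j : Fin p, (if (r : ℕ) = (j : ℕ) then (t r : ℂ) * v (Sum.inl j) else 0) :=
        Finset.sum_congr rfl fun j _ => by
          simp only [stmt7.Ht, Matrix.fromBlocks_apply₂₁, Matrix.of_apply, ite_mul, zero_mul]
      rw [h1, sum_fin_ite]
      rw [dif_pos (lt_of_lt_of_le r.isLt hpq)]
    -- bound the total sum
    have hsplit : (∑ u, norm ((starRingEnd ℂ) (v u) * (∑ w, stmt7.Ht p q t u w * v w)))
        = (∑ i' : Fin p, norm (v (Sum.inl i')) *
            norm (∑ w, stmt7.Ht p q t (Sum.inl i') w * v w))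
          + ∑ r : Fin q, norm (v (Sum.inr r)) *
            norm (∑ w, stmt7.Ht p q t (Sum.inr r) w * v w) := by
      rw [Fintype.sum_sum_type]
      congr 1 <;> exact Finset.sum_congr rfl fun u _ => by
        rw [norm_mul, Complex.norm_conj]
    have hterm1 : (∑ i' : Fin p, norm (v (Sum.inl i')) *
          norm (∑ w, stmt7.Ht p q t (Sum.inl i') w * v w))
        = ∑ j : Fin q, norm (v (Sum.inl ⟨(j : ℕ), lt_of_lt_of_le j.isLt hpq⟩)) *
            (t j * norm (v (Sum.inr j))) := by
      rw [← sum_fin_dite hpq (fun j => norm (v (Sum.inl ⟨(j : ℕ), lt_of_lt_of_le j.isLt hpq⟩)) *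
            (t j * norm (v (Sum.inr j))))]
      refine Finset.sum_congr rfl fun i' _ => ?_
      rw [hSl i']
      by_cases h : (i' : ℕ) < q
      · rw [dif_pos h, dif_pos h, norm_mul, Complex.norm_real, Real.norm_eq_abs,
          abs_of_nonneg (ht0 ⟨(i' : ℕ), h⟩)]
      · rw [dif_neg h, dif_neg h, norm_zero, mul_zero]
    have hterm2 : (∑ r : Fin q, norm (v (Sum.inr r)) *
          norm (∑ w, stmt7.Ht p q t (Sum.inr r) w * v w))
        = ∑ r : Fin q, norm (v (Sum.inr r)) *
            (t r * norm (v (Sum.inl ⟨(r : ℕ), lt_of_lt_of_le r.isLt hpq⟩))) :=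
      Finset.sum_congr rfl fun r _ => by
        rw [hSr r, norm_mul, Complex.norm_real, Real.norm_eq_abs, abs_of_nonneg (ht0 r)]
    have hpair : ∀ r : Fin q,
        norm (v (Sum.inl ⟨(r : ℕ), lt_of_lt_of_le r.isLt hpq⟩)) * (t r * norm (v (Sum.inr r)))
        + norm (v (Sum.inr r)) * (t r * norm (v (Sum.inl ⟨(r : ℕ), lt_of_lt_of_le r.isLt hpq⟩)))
        ≤ B * (Complex.normSq (v (Sum.inl ⟨(r : ℕ), lt_of_lt_of_le r.isLt hpq⟩))
            + Complex.normSq (v (Sum.inr r))) := by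
      intro r
      set A1 := norm (v (Sum.inl ⟨(r : ℕ), lt_of_lt_of_le r.isLt hpq⟩))
      set A2 := norm (v (Sum.inr r))
      have e1 : Complex.normSq (v (Sum.inl ⟨(r : ℕ), lt_of_lt_of_le r.isLt hpq⟩)) = A1 ^ 2 :=
        (Complex.sq_norm _).symm
      have e2 : Complex.normSq (v (Sum.inr r)) = A2 ^ 2 := (Complex.sq_norm _).symm
      rw [e1, e2]
      have hA1 : 0 ≤ A1 := norm_nonneg _
      have hA2 : 0 ≤ A2 := norm_nonneg _
      nlinarith [sq_nonneg (A1 - A2), htB r, ht0 r, mul_nonneg hA1 hA2]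
    have hsub : (∑ r : Fin q, (Complex.normSq (v (Sum.inl ⟨(r : ℕ), lt_of_lt_of_le r.isLt hpq⟩))
          + Complex.normSq (v (Sum.inr r)))) ≤ 1 := by
      rw [← hnorm, Fintype.sum_sum_type, Finset.sum_add_distrib]
      gcongr
      · rw [← sum_fin_dite hpq (fun r : Fin q =>
            Complex.normSq (v (Sum.inl ⟨(r : ℕ), lt_of_lt_of_le r.isLt hpq⟩)))]
        refine Finset.sum_le_sum fun i' _ => ?_
        by_cases h : (i' : ℕ) < q
        · rw [dif_pos h]
        · rw [dif_neg h]
          exact Complex.normSq_nonneg _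
    calc |a i| ≤ _ := habs
      _ = _ + _ := hsplit
      _ = (∑ j : Fin q, norm (v (Sum.inl ⟨(j : ℕ), lt_of_lt_of_le j.isLt hpq⟩)) *
            (t j * norm (v (Sum.inr j))))
          + ∑ r : Fin q, norm (v (Sum.inr r)) *
            (t r * norm (v (Sum.inl ⟨(r : ℕ), lt_of_lt_of_le r.isLt hpq⟩))) := by
            rw [hterm1, hterm2]
      _ = ∑ r : Fin q, (norm (v (Sum.inl ⟨(r : ℕ), lt_of_lt_of_le r.isLt hpq⟩)) *
            (t r * norm (v (Sum.inr r)))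
            + norm (v (Sum.inr r)) *
            (t r * norm (v (Sum.inl ⟨(r : ℕ), lt_of_lt_of_le r.isLt hpq⟩)))) := by
            rw [Finset.sum_add_distrib]
      _ ≤ ∑ r : Fin q, B * (Complex.normSq (v (Sum.inl ⟨(r : ℕ), lt_of_lt_of_le r.isLt hpq⟩))
            + Complex.normSq (v (Sum.inr r))) := Finset.sum_le_sum fun r _ => hpair r
      _ = B * ∑ r : Fin q, (Complex.normSq (v (Sum.inl ⟨(r : ℕ), lt_of_lt_of_le r.isLt hpq⟩))
            + Complex.normSq (v (Sum.inr r))) := by rw [Finset.mul_sum]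
      _ ≤ B * 1 := by
            apply mul_le_mul_of_nonneg_left hsub hB0
      _ < R := by rwa [mul_one]
  · -- exponential formula
    have hUinv : U⁻¹ = star U := Matrix.inv_eq_right_inv hUU
    have hunit : IsUnit U := ⟨⟨U, star U, hUU, hUU'⟩, rfl⟩
    have hform : stmt7.Ht p q t = U * Matrix.diagonal (RCLike.ofReal ∘ a) * U⁻¹ := by
      rw [hUinv]; exact hspec
    have hED : (NormedSpace.exp (RCLike.ofReal ∘ a : (Fin p ⊕ Fin q) → ℂ))
        = fun i => ((Real.exp (a i) : ℝ) : ℂ) := by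
      rw [Pi.exp_def]
      funext i
      rw [Function.comp_apply, ← Complex.exp_eq_exp_ℂ]
      exact (Complex.ofReal_exp (a i)).symm
    rw [hform, Matrix.exp_conj _ _ hunit, Matrix.exp_diagonal, hED, hUinv,
      Matrix.star_eq_conjTranspose]


lemma cancel_mid {n : Type*} [Fintype n] [DecidableEq n] {A B : Matrix n n ℂ}
    (h : A * B = 1) (X : Matrix n n ℂ) : A * (B * X) = X := by
  rw [← Matrix.mul_assoc, h, Matrix.one_mul]

noncomputable def frob {n : Type*} [Fintype n] (M : Matrix n n ℂ) : ℝ :=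
  ∑ u, ∑ v, Complex.normSq (M u v)

lemma frob_eq_trace {n : Type*} [Fintype n] (M : Matrix n n ℂ) :
    ((frob M : ℝ) : ℂ) = Matrix.trace (Mᴴ * M) := by
  rw [Matrix.trace]
  unfold frob
  push_cast
  rw [Finset.sum_comm]
  refine Finset.sum_congr rfl fun v _ => ?_
  rw [Matrix.diag_apply, Matrix.mul_apply]
  refine Finset.sum_congr rfl fun u _ => ?_
  rw [Matrix.conjTranspose_apply, Complex.star_def, mul_comm, Complex.mul_conj]

lemma frob_unitary_left {n : Type*} [Fintype n] [DecidableEq n]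
    {Q : Matrix n n ℂ} (hQ : Q ∈ Matrix.unitaryGroup n ℂ) (M : Matrix n n ℂ) :
    frob (Q * M) = frob M := by
  have h1 : Qᴴ * Q = 1 := by
    rw [← Matrix.star_eq_conjTranspose]
    exact Matrix.mem_unitaryGroup_iff'.mp hQ
  have h : ((frob (Q * M) : ℝ) : ℂ) = ((frob M : ℝ) : ℂ) := by
    rw [frob_eq_trace, frob_eq_trace]
    congr 1
    rw [Matrix.conjTranspose_mul, Matrix.mul_assoc, ← Matrix.mul_assoc Qᴴ Q M, h1,
      Matrix.one_mul]
  exact_mod_cast h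

lemma frob_unitary_right {n : Type*} [Fintype n] [DecidableEq n]
    {Q : Matrix n n ℂ} (hQ : Q ∈ Matrix.unitaryGroup n ℂ) (M : Matrix n n ℂ) :
    frob (M * Q) = frob M := by
  have h1 : Q * Qᴴ = 1 := by
    rw [← Matrix.star_eq_conjTranspose]
    exact Matrix.mem_unitaryGroup_iff.mp hQ
  have h : ((frob (M * Q) : ℝ) : ℂ) = ((frob M : ℝ) : ℂ) := by
    rw [frob_eq_trace, frob_eq_trace, Matrix.conjTranspose_mul]
    calc Matrix.trace (Qᴴ * Mᴴ * (M * Q)) = Matrix.trace (Qᴴ * (Mᴴ * (M * Q))) := by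
          rw [Matrix.mul_assoc]
      _ = Matrix.trace (Mᴴ * (M * Q) * Qᴴ) := Matrix.trace_mul_comm _ _
      _ = Matrix.trace (Mᴴ * M * (Q * Qᴴ)) := by
          rw [Matrix.mul_assoc, Matrix.mul_assoc, Matrix.mul_assoc]
      _ = Matrix.trace (Mᴴ * M) := by rw [h1, Matrix.mul_one]
  exact_mod_cast h

lemma inK_unitary {p q : ℕ} {k : Matrix (Fin p ⊕ Fin q) (Fin p ⊕ Fin q) ℂ}
    (hk : stmt7.inK p q k) : k ∈ Matrix.unitaryGroup (Fin p ⊕ Fin q) ℂ := by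
  obtain ⟨A, hA, D, hD, -, rfl⟩ := hk
  have hA1 : Aᴴ * A = 1 := by
    rw [← Matrix.star_eq_conjTranspose]; exact Matrix.mem_unitaryGroup_iff'.mp hA
  have hD1 : Dᴴ * D = 1 := by
    rw [← Matrix.star_eq_conjTranspose]; exact Matrix.mem_unitaryGroup_iff'.mp hD
  rw [Matrix.mem_unitaryGroup_iff', Matrix.star_eq_conjTranspose,
    Matrix.fromBlocks_conjTranspose, Matrix.fromBlocks_multiply]
  simp [hA1, hD1, ← Matrix.fromBlocks_one]

lemma int_small {N : ℕ} (hN : 3 ≤ N) {α β : ℤ}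
    (h : (N : ℝ) ^ 2 * ((α : ℝ) ^ 2 + (β : ℝ) ^ 2) < (N : ℝ) ^ 2) : α = 0 ∧ β = 0 := by
  have hN2 : (0 : ℝ) < (N : ℝ) ^ 2 := by
    have : (3 : ℝ) ≤ (N : ℝ) := by exact_mod_cast hN
    nlinarith
  have h1 : (α : ℝ) ^ 2 + (β : ℝ) ^ 2 < 1 := by nlinarith
  have h2 : α ^ 2 + β ^ 2 < 1 := by exact_mod_cast h1
  constructor <;> nlinarith [sq_nonneg α, sq_nonneg β]

lemma int_diag {N : ℕ} (hN : 3 ≤ N) {α β : ℤ}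
    (h : (1 + (N : ℤ) * α) ^ 2 + ((N : ℤ) * β) ^ 2 = 1) : α = 0 ∧ β = 0 := by
  set M : ℤ := (N : ℤ) with hM
  have hM3 : 3 ≤ M := by rw [hM]; exact_mod_cast hN
  have key : 2 * (M * α) + (M * α) ^ 2 + (M * β) ^ 2 = 0 := by linear_combination h
  have h1 : M * α ≤ 0 := by nlinarith [sq_nonneg (M * α), sq_nonneg (M * β)]
  have h2 : -2 ≤ M * α := by nlinarith [sq_nonneg (M * α + 1), sq_nonneg (M * β)]
  have hα : α = 0 := by
    have h3 : α ≤ 0 := by nlinarith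
    have h4 : 0 ≤ α := by nlinarith
    omega
  subst hα
  have hβ2 : (M * β) ^ 2 = 0 := by linarith [key]
  have hβ : M * β = 0 := by
    exact pow_eq_zero_iff (two_ne_zero) |>.mp hβ2
  have : β = 0 := by
    rcases mul_eq_zero.mp hβ with h | h
    · omega
    · exact h
  exact ⟨rfl, this⟩


end aux

set_option maxHeartbeats 1600000 in
/-- For `N ≥ 3` and `R = artanh √(ν_n(N))`: if `γ ∈ Γ_G(N)` can be written as
`k₁ exp(H_t) k₂ exp(H_l)⁻¹ k₃` with `k₁,k₂,k₃ ∈ K` and `t,l ∈ T_R`, then `γ = I_n`. -/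
theorem stmt_7 (p q N : ℕ) (hq : 1 ≤ q) (hpq : q ≤ p) (hN : 3 ≤ N)
    (R : ℝ) (hR : R = stmt7.artanh (Real.sqrt (stmt7.nu ((p : ℝ) + q) N)))
    (γ : Matrix (Fin p ⊕ Fin q) (Fin p ⊕ Fin q) ℂ) (hγ : stmt7.inGamma p q N γ)
    (k₁ k₂ k₃ : Matrix (Fin p ⊕ Fin q) (Fin p ⊕ Fin q) ℂ)
    (hk₁ : stmt7.inK p q k₁) (hk₂ : stmt7.inK p q k₂) (hk₃ : stmt7.inK p q k₃)
    (t l : Fin q → ℝ) (ht : stmt7.inT q R t) (hl : stmt7.inT q R l)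
    (hdec : γ = k₁ * NormedSpace.exp (stmt7.Ht p q t) * k₂ *
      (NormedSpace.exp (stmt7.Ht p q l))⁻¹ * k₃) :
    γ = 1 := by
  classical
  obtain ⟨hdet, hJrel, hent⟩ := hγ
  set ε : (Fin p ⊕ Fin q) → ℝ := Sum.elim (fun _ => 1) (fun _ => -1) with hεdef
  set J : Matrix (Fin p ⊕ Fin q) (Fin p ⊕ Fin q) ℂ :=
    Matrix.diagonal (fun u => ((ε u : ℝ) : ℂ)) with hJdef
  have hIJ : stmt7.Ipq p q = J := by
    ext u v
    rcases u with i|i <;> rcases v with j|j <;>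
      simp [stmt7.Ipq, hJdef, Matrix.diagonal_apply, Matrix.one_apply, hεdef,
        Matrix.fromBlocks_apply₁₁, Matrix.fromBlocks_apply₁₂, Matrix.fromBlocks_apply₂₁,
        Matrix.fromBlocks_apply₂₂]
    split <;> simp
  have hJrel' : γᴴ * J * γ = J := by rw [← hIJ]; exact hJrel
  have hε1 : ∀ u, ε u * ε u = 1 := fun u => by cases u <;> simp [hεdef]
  have hJJ : J * J = 1 := by
    rw [hJdef, Matrix.diagonal_mul_diagonal]
    have h3 : (fun u => ((ε u : ℝ) : ℂ) * ((ε u : ℝ) : ℂ)) = fun _ => (1 : ℂ) := by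
      funext u
      rw [← Complex.ofReal_mul, hε1 u, Complex.ofReal_one]
    rw [h3, Matrix.diagonal_one]
  have hJrelA : γᴴ * (J * γ) = J := by rw [← Matrix.mul_assoc]; exact hJrel'
  have hleft : (J * γᴴ * J) * γ = 1 := by
    simp only [Matrix.mul_assoc]
    rw [hJrelA, hJJ]
  have hright : γ * (J * γᴴ * J) = 1 := mul_eq_one_comm.mp hleft
  have hrightA : γ * J * γᴴ * J = 1 := by
    simpa only [Matrix.mul_assoc] using hright
  have hJ2 : γ * J * γᴴ = J := by
    calc γ * J * γᴴ = γ * J * γᴴ * (J * J) := by rw [hJJ, Matrix.mul_one]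
      _ = (γ * J * γᴴ * J) * J := by rw [← Matrix.mul_assoc]
      _ = J := by rw [hrightA, Matrix.one_mul]
  -- column and row relations
  have hcol : ∀ v0, (∑ u, ε u * Complex.normSq (γ u v0)) = ε v0 := by
    intro v0
    have h := Matrix.ext_iff.2 hJrel' v0 v0
    have hL : (γᴴ * J * γ) v0 v0
        = ∑ u, (((ε u : ℝ) : ℂ) * ((starRingEnd ℂ) (γ u v0) * γ u v0)) := by
      rw [Matrix.mul_apply]
      refine Finset.sum_congr rfl fun u _ => ?_
      rw [Matrix.mul_diagonal, Matrix.conjTranspose_apply, Complex.star_def]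
      ring
    have hRR : J v0 v0 = ((ε v0 : ℝ) : ℂ) := by rw [hJdef, Matrix.diagonal_apply_eq]
    rw [hL, hRR] at h
    have hc : ((∑ u, ε u * Complex.normSq (γ u v0) : ℝ) : ℂ) = ((ε v0 : ℝ) : ℂ) := by
      rw [← h]
      push_cast
      refine Finset.sum_congr rfl fun u _ => ?_
      congr 1
      rw [mul_comm, Complex.mul_conj]
    exact_mod_cast hc
  have hrow : ∀ u0, (∑ v0, ε v0 * Complex.normSq (γ u0 v0)) = ε u0 := by
    intro u0
    have h := Matrix.ext_iff.2 hJ2 u0 u0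
    have hL : (γ * J * γᴴ) u0 u0
        = ∑ v0, (((ε v0 : ℝ) : ℂ) * (γ u0 v0 * (starRingEnd ℂ) (γ u0 v0))) := by
      rw [Matrix.mul_apply]
      refine Finset.sum_congr rfl fun v0 _ => ?_
      rw [Matrix.mul_diagonal, Matrix.conjTranspose_apply, Complex.star_def]
      ring
    have hRR : J u0 u0 = ((ε u0 : ℝ) : ℂ) := by rw [hJdef, Matrix.diagonal_apply_eq]
    rw [hL, hRR] at h
    have hc : ((∑ v0, ε v0 * Complex.normSq (γ u0 v0) : ℝ) : ℂ) = ((ε u0 : ℝ) : ℂ) := by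
      rw [← h]
      push_cast
      refine Finset.sum_congr rfl fun v0 _ => ?_
      congr 1
      rw [Complex.mul_conj]
    exact_mod_cast hc
  -- column relations split by blocks
  have hcol_l : ∀ j : Fin p,
      (∑ i : Fin p, Complex.normSq (γ (Sum.inl i) (Sum.inl j)))
        - (∑ i : Fin q, Complex.normSq (γ (Sum.inr i) (Sum.inl j))) = 1 := by
    intro j
    have h := hcol (Sum.inl j)
    rw [Fintype.sum_sum_type] at h
    simp only [hεdef, Sum.elim_inl, Sum.elim_inr, one_mul, neg_one_mul,
      Finset.sum_neg_distrib] at h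
    linarith
  have hcol_r : ∀ j : Fin q,
      (∑ i : Fin p, Complex.normSq (γ (Sum.inl i) (Sum.inr j)))
        - (∑ i : Fin q, Complex.normSq (γ (Sum.inr i) (Sum.inr j))) = -1 := by
    intro j
    have h := hcol (Sum.inr j)
    rw [Fintype.sum_sum_type] at h
    simp only [hεdef, Sum.elim_inl, Sum.elim_inr, one_mul, neg_one_mul,
      Finset.sum_neg_distrib] at h
    linarith
  have hrow_l : ∀ i : Fin p,
      (∑ j : Fin p, Complex.normSq (γ (Sum.inl i) (Sum.inl j)))
        - (∑ j : Fin q, Complex.normSq (γ (Sum.inl i) (Sum.inr j))) = 1 := by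
    intro i
    have h := hrow (Sum.inl i)
    rw [Fintype.sum_sum_type] at h
    simp only [hεdef, Sum.elim_inl, Sum.elim_inr, one_mul, neg_one_mul,
      Finset.sum_neg_distrib] at h
    linarith
  -- the Cartan decomposition data
  have hq0 : 0 < q := hq
  have hp0 : 0 < p := lt_of_lt_of_le hq0 hpq
  obtain ⟨ht_dec, ht_pos, ht_lt⟩ := ht
  obtain ⟨hl_dec, hl_pos, hl_lt⟩ := hl
  have htmax : ∀ i, t i ≤ t ⟨0, hq0⟩ := by
    intro i
    by_cases h : i = ⟨0, hq0⟩
    · rw [h]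
    · have h3 : (⟨0, hq0⟩ : Fin q) < i := by
        rw [Fin.lt_def]
        exact Nat.pos_of_ne_zero (fun hh => h (Fin.ext hh))
      exact le_of_lt (ht_dec _ _ h3)
  have hlmax : ∀ i, l i ≤ l ⟨0, hq0⟩ := by
    intro i
    by_cases h : i = ⟨0, hq0⟩
    · rw [h]
    · have h3 : (⟨0, hq0⟩ : Fin q) < i := by
        rw [Fin.lt_def]
        exact Nat.pos_of_ne_zero (fun hh => h (Fin.ext hh))
      exact le_of_lt (hl_dec _ _ h3)
  have hR0 : 0 < R := lt_trans (ht_pos ⟨0, hq0⟩) (ht_lt ⟨0, hq0⟩)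
  obtain ⟨U₁, a, hU₁mem, ha, hexpt⟩ :=
    aux.Ht_decomp p q hpq t (fun i => (ht_pos i).le) htmax (ht_pos ⟨0, hq0⟩).le (ht_lt ⟨0, hq0⟩)
  obtain ⟨U₂, b, hU₂mem, hb, hexpl⟩ :=
    aux.Ht_decomp p q hpq l (fun i => (hl_pos i).le) hlmax (hl_pos ⟨0, hq0⟩).le (hl_lt ⟨0, hq0⟩)
  set Λ := Matrix.diagonal (fun i => (Real.exp (a i) : ℂ)) with hΛdef
  set Λ' := Matrix.diagonal (fun i => (Real.exp (-(a i)) : ℂ)) with hΛ'def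
  set Ξ := Matrix.diagonal (fun i => (Real.exp (b i) : ℂ)) with hΞdef
  set Ξ' := Matrix.diagonal (fun i => (Real.exp (-(b i)) : ℂ)) with hΞ'def
  have hdpair : ∀ c : (Fin p ⊕ Fin q) → ℝ,
      Matrix.diagonal (fun i => (Real.exp (c i) : ℂ))
        * Matrix.diagonal (fun i => (Real.exp (-(c i)) : ℂ)) = 1 := by
    intro c
    rw [Matrix.diagonal_mul_diagonal]
    have h4 : (fun i => ((Real.exp (c i) : ℝ) : ℂ) * ((Real.exp (-(c i)) : ℝ) : ℂ))
        = fun _ => (1 : ℂ) := by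
      funext i
      rw [← Complex.ofReal_mul, ← Real.exp_add, add_neg_cancel, Real.exp_zero,
        Complex.ofReal_one]
    rw [h4, Matrix.diagonal_one]
  have hdpair' : ∀ c : (Fin p ⊕ Fin q) → ℝ,
      Matrix.diagonal (fun i => (Real.exp (-(c i)) : ℂ))
        * Matrix.diagonal (fun i => (Real.exp (c i) : ℂ)) = 1 := by
    intro c
    rw [Matrix.diagonal_mul_diagonal]
    have h4 : (fun i => ((Real.exp (-(c i)) : ℝ) : ℂ) * ((Real.exp (c i) : ℝ) : ℂ))
        = fun _ => (1 : ℂ) := by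
      funext i
      rw [← Complex.ofReal_mul, ← Real.exp_add, neg_add_cancel, Real.exp_zero,
        Complex.ofReal_one]
    rw [h4, Matrix.diagonal_one]
  have hΛΛ' : Λ * Λ' = 1 := hdpair a
  have hΞΞ' : Ξ * Ξ' = 1 := hdpair b
  have hΞ'Ξ : Ξ' * Ξ = 1 := hdpair' b
  -- unitary bookkeeping
  have hUU : ∀ {M : Matrix (Fin p ⊕ Fin q) (Fin p ⊕ Fin q) ℂ},
      M ∈ Matrix.unitaryGroup (Fin p ⊕ Fin q) ℂ → (Mᴴ * M = 1 ∧ M * Mᴴ = 1) := by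
    intro M hM
    constructor
    · rw [← Matrix.star_eq_conjTranspose]; exact Matrix.mem_unitaryGroup_iff'.mp hM
    · rw [← Matrix.star_eq_conjTranspose]; exact Matrix.mem_unitaryGroup_iff.mp hM
  have hstarmem : ∀ {M : Matrix (Fin p ⊕ Fin q) (Fin p ⊕ Fin q) ℂ},
      M ∈ Matrix.unitaryGroup (Fin p ⊕ Fin q) ℂ →
        Mᴴ ∈ Matrix.unitaryGroup (Fin p ⊕ Fin q) ℂ := by
    intro M hM
    rw [← Matrix.star_eq_conjTranspose]
    exact Unitary.star_mem hM
  have hk₁mem := aux.inK_unitary hk₁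
  have hk₂mem := aux.inK_unitary hk₂
  have hk₃mem := aux.inK_unitary hk₃
  obtain ⟨hU₁c, hU₁c'⟩ := hUU hU₁mem
  obtain ⟨hU₂c, hU₂c'⟩ := hUU hU₂mem
  obtain ⟨hk₁c, hk₁c'⟩ := hUU hk₁mem
  obtain ⟨hk₂c, hk₂c'⟩ := hUU hk₂mem
  obtain ⟨hk₃c, hk₃c'⟩ := hUU hk₃mem
  set W := U₁ᴴ * k₂ * U₂ with hWdef
  have hWmem : W ∈ Matrix.unitaryGroup (Fin p ⊕ Fin q) ℂ := by
    rw [hWdef]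
    exact mul_mem (mul_mem (hstarmem hU₁mem) hk₂mem) hU₂mem
  obtain ⟨hWc, hWc'⟩ := hUU hWmem
  -- decomposition of γ
  have hexp_l_inv : (NormedSpace.exp (stmt7.Ht p q l))⁻¹ = U₂ * Ξ' * U₂ᴴ := by
    apply Matrix.inv_eq_right_inv
    rw [hexpl]
    simp only [Matrix.mul_assoc]
    rw [aux.cancel_mid hU₂c, aux.cancel_mid hΞΞ']
    exact hU₂c'
  have hγfact : γ = (k₁ * U₁) * (Λ * (W * Ξ')) * (U₂ᴴ * k₃) := by
    rw [hdec, hexpt, hexp_l_inv, hWdef]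
    simp only [Matrix.mul_assoc]
  set Z := (k₃ᴴ * U₂) * (Ξ * (Wᴴ * Λ')) * (U₁ᴴ * k₁ᴴ) with hZdef
  have hγZ : γ * Z = 1 := by
    rw [hγfact, hZdef]
    simp only [Matrix.mul_assoc]
    rw [aux.cancel_mid hk₃c', aux.cancel_mid hU₂c, aux.cancel_mid hΞ'Ξ,
      aux.cancel_mid hWc', aux.cancel_mid hΛΛ', aux.cancel_mid hU₁c']
    exact hk₁c'
  have hZγ : Z * γ = 1 := mul_eq_one_comm.mp hγZ
  have hZJ : Z = J * γᴴ * J := by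
    calc Z = Z * (γ * (J * γᴴ * J)) := by rw [hright, Matrix.mul_one]
      _ = (Z * γ) * (J * γᴴ * J) := by rw [← Matrix.mul_assoc]
      _ = J * γᴴ * J := by rw [hZγ, Matrix.one_mul]
  have hfrobZγ : aux.frob Z = aux.frob γ := by
    rw [hZJ]
    unfold aux.frob
    have h1 : ∀ u v0, Complex.normSq ((J * γᴴ * J) u v0) = Complex.normSq (γ v0 u) := by
      intro u v0
      have h2 : (J * γᴴ * J) u v0
          = ((ε u : ℝ) : ℂ) * (starRingEnd ℂ) (γ v0 u) * ((ε v0 : ℝ) : ℂ) := by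
        rw [hJdef, Matrix.mul_diagonal, Matrix.diagonal_mul, Matrix.conjTranspose_apply,
          Complex.star_def]
      rw [h2, Complex.normSq_mul, Complex.normSq_mul, Complex.normSq_ofReal,
        Complex.normSq_ofReal, hε1 u, hε1 v0, Complex.normSq_conj, one_mul, mul_one]
    calc (∑ u, ∑ v0, Complex.normSq ((J * γᴴ * J) u v0))
        = ∑ u, ∑ v0, Complex.normSq (γ v0 u) :=
          Finset.sum_congr rfl fun u _ => Finset.sum_congr rfl fun v0 _ => h1 u v0
      _ = ∑ v0, ∑ u, Complex.normSq (γ v0 u) := Finset.sum_comm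
  -- frobenius norms via the decomposition
  have hfrobγW : aux.frob γ
      = ∑ u, ∑ v0, Complex.normSq (W u v0) * Real.exp (2 * (a u - b v0)) := by
    have h0 : aux.frob γ = aux.frob (Λ * (W * Ξ')) := by
      conv_lhs => rw [hγfact]
      rw [aux.frob_unitary_right (mul_mem (hstarmem hU₂mem) hk₃mem),
        aux.frob_unitary_left (mul_mem hk₁mem hU₁mem)]
    rw [h0]
    unfold aux.frob
    refine Finset.sum_congr rfl fun u _ => Finset.sum_congr rfl fun v0 _ => ?_
    have hentry : (Λ * (W * Ξ')) u v0
        = ((Real.exp (a u) : ℝ) : ℂ) * (W u v0 * ((Real.exp (-(b v0)) : ℝ) : ℂ)) := by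
      rw [hΛdef, hΞ'def, Matrix.diagonal_mul, Matrix.mul_diagonal]
    rw [hentry, Complex.normSq_mul, Complex.normSq_mul, Complex.normSq_ofReal,
      Complex.normSq_ofReal]
    have e3 : Real.exp (a u) * Real.exp (a u) * (Real.exp (-(b v0)) * Real.exp (-(b v0)))
        = Real.exp (2 * (a u - b v0)) := by
      rw [← Real.exp_add, ← Real.exp_add, ← Real.exp_add]
      congr 1
      ring
    linear_combination Complex.normSq (W u v0) * e3
  have hfrobZW : aux.frob Z
      = ∑ u, ∑ v0, Complex.normSq (W u v0) * Real.exp (-(2 * (a u - b v0))) := by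
    have h0 : aux.frob Z = aux.frob (Ξ * (Wᴴ * Λ')) := by
      conv_lhs => rw [hZdef]
      rw [aux.frob_unitary_right (mul_mem (hstarmem hU₁mem) (hstarmem hk₁mem)),
        aux.frob_unitary_left (mul_mem (hstarmem hk₃mem) hU₂mem)]
    rw [h0]
    unfold aux.frob
    have h1 : ∀ x y, Complex.normSq ((Ξ * (Wᴴ * Λ')) x y)
        = Complex.normSq (W y x) * Real.exp (-(2 * (a y - b x))) := by
      intro x y
      have hentry : (Ξ * (Wᴴ * Λ')) x y
          = ((Real.exp (b x) : ℝ) : ℂ) * (Wᴴ x y * ((Real.exp (-(a y)) : ℝ) : ℂ)) := by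
        rw [hΞdef, hΛ'def, Matrix.diagonal_mul, Matrix.mul_diagonal]
      rw [hentry, Complex.normSq_mul, Complex.normSq_mul, Complex.normSq_ofReal,
        Complex.normSq_ofReal, Matrix.conjTranspose_apply, Complex.star_def,
        Complex.normSq_conj]
      have e3 : Real.exp (b x) * Real.exp (b x) * (Real.exp (-(a y)) * Real.exp (-(a y)))
          = Real.exp (-(2 * (a y - b x))) := by
        rw [← Real.exp_add, ← Real.exp_add, ← Real.exp_add]
        congr 1
        ring
      linear_combination Complex.normSq (W y x) * e3
    calc (∑ x, ∑ y, Complex.normSq ((Ξ * (Wᴴ * Λ')) x y))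
        = ∑ x, ∑ y, Complex.normSq (W y x) * Real.exp (-(2 * (a y - b x))) :=
          Finset.sum_congr rfl fun x _ => Finset.sum_congr rfl fun y _ => h1 x y
      _ = ∑ y, ∑ x, Complex.normSq (W y x) * Real.exp (-(2 * (a y - b x))) :=
          Finset.sum_comm
  -- facts about W
  have hWrow : ∀ u, (∑ v0, Complex.normSq (W u v0)) = 1 := by
    intro u
    have h := Matrix.ext_iff.2 hWc' u u
    rw [Matrix.mul_apply] at h
    have h2 : (∑ v0, W u v0 * Wᴴ v0 u)
        = ∑ v0, ((Complex.normSq (W u v0) : ℝ) : ℂ) :=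
      Finset.sum_congr rfl fun v0 _ => by
        rw [Matrix.conjTranspose_apply, Complex.star_def, Complex.mul_conj]
    rw [h2, Matrix.one_apply_eq] at h
    have h3 : (((∑ v0, Complex.normSq (W u v0)) : ℝ) : ℂ) = 1 := by
      push_cast
      exact h
    exact_mod_cast h3
  have hWtot : (∑ u, ∑ v0, Complex.normSq (W u v0)) = ((p : ℝ) + q) := by
    rw [Finset.sum_congr rfl (fun u (_ : u ∈ Finset.univ) => hWrow u), Finset.sum_const]
    simp [Finset.card_univ]
  have hWex : ∃ u v0, 0 < Complex.normSq (W u v0) := by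
    by_contra hcon
    push_neg at hcon
    have h0 : (∑ v0, Complex.normSq (W (Sum.inl ⟨0, hp0⟩) v0)) = 0 :=
      Finset.sum_eq_zero fun v0 _ =>
        le_antisymm (hcon _ _) (Complex.normSq_nonneg _)
    rw [hWrow] at h0
    exact one_ne_zero h0
  obtain ⟨u0, w0, hpos⟩ := hWex
  -- strict bound
  have hcosh : ∀ u v0, Real.exp (2 * (a u - b v0)) + Real.exp (-(2 * (a u - b v0)))
      < Real.exp (4 * R) + Real.exp (-(4 * R)) := by
    intro u v0
    have h2 : |a u - b v0| ≤ |a u| + |b v0| := abs_sub _ _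
    have h1 : |2 * (a u - b v0)| < |4 * R| := by
      rw [abs_of_pos (by linarith : (0 : ℝ) < 4 * R), abs_mul]
      have : |(2 : ℝ)| = 2 := by norm_num
      rw [this]
      have h5 := ha u
      have h6 := hb v0
      linarith
    have h3 := Real.cosh_lt_cosh.2 h1
    rw [Real.cosh_eq, Real.cosh_eq] at h3
    linarith
  have hsum2 : aux.frob γ + aux.frob Z
      = ∑ u, ∑ v0, Complex.normSq (W u v0)
          * (Real.exp (2 * (a u - b v0)) + Real.exp (-(2 * (a u - b v0)))) := by
    rw [hfrobγW, hfrobZW, ← Finset.sum_add_distrib]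
    refine Finset.sum_congr rfl fun u _ => ?_
    rw [← Finset.sum_add_distrib]
    exact Finset.sum_congr rfl fun v0 _ => by ring
  have hfinlt : aux.frob γ + aux.frob Z
      < ((p : ℝ) + q) * (Real.exp (4 * R) + Real.exp (-(4 * R))) := by
    rw [hsum2]
    set C := Real.exp (4 * R) + Real.exp (-(4 * R)) with hCdef
    have e1 : (∑ u, ∑ v0, Complex.normSq (W u v0)
          * (Real.exp (2 * (a u - b v0)) + Real.exp (-(2 * (a u - b v0)))))
        = ∑ x : (Fin p ⊕ Fin q) × (Fin p ⊕ Fin q), Complex.normSq (W x.1 x.2)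
          * (Real.exp (2 * (a x.1 - b x.2)) + Real.exp (-(2 * (a x.1 - b x.2)))) :=
      (Fintype.sum_prod_type (fun x : (Fin p ⊕ Fin q) × (Fin p ⊕ Fin q) =>
        Complex.normSq (W x.1 x.2)
          * (Real.exp (2 * (a x.1 - b x.2)) + Real.exp (-(2 * (a x.1 - b x.2)))))).symm
    have e2 : (∑ x : (Fin p ⊕ Fin q) × (Fin p ⊕ Fin q), Complex.normSq (W x.1 x.2) * C)
        = ((p : ℝ) + q) * C := by
      rw [← Finset.sum_mul]
      rw [Fintype.sum_prod_type, hWtot]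
    rw [e1, ← e2]
    refine Finset.sum_lt_sum (fun x _ => ?_) ⟨(u0, w0), Finset.mem_univ _, ?_⟩
    · exact mul_le_mul_of_nonneg_left (hcosh x.1 x.2).le (Complex.normSq_nonneg _)
    · exact mul_lt_mul_of_pos_left (hcosh u0 w0) hpos
  have hnn : (2 : ℝ) ≤ (p : ℝ) + q := by
    have h1 : (1 : ℝ) ≤ (q : ℝ) := by exact_mod_cast hq
    have h2 : (1 : ℝ) ≤ (p : ℝ) := by exact_mod_cast le_trans hq hpq
    linarith
  have hcoshval := aux.cosh_val hnn (by exact_mod_cast hN : (3 : ℝ) ≤ (N : ℝ)) R hR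
  have hfrobbound : aux.frob γ < ((p : ℝ) + q) + 4 * (N : ℝ) ^ 2 := by
    have hpq0 : ((p : ℝ) + q) ≠ 0 := by linarith
    have h7 : ((p : ℝ) + q) * (2 + 8 * (N : ℝ) ^ 2 / ((p : ℝ) + q))
        = 2 * ((p : ℝ) + q) + 8 * (N : ℝ) ^ 2 := by
      field_simp
    have h8 : aux.frob γ + aux.frob Z = 2 * aux.frob γ := by rw [hfrobZγ]; ring
    rw [hcoshval] at hfinlt
    rw [h8, h7] at hfinlt
    linarith
  -- block sums
  set SA := ∑ i : Fin p, ∑ j : Fin p, Complex.normSq (γ (Sum.inl i) (Sum.inl j)) with hSAdef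
  set SB := ∑ i : Fin p, ∑ j : Fin q, Complex.normSq (γ (Sum.inl i) (Sum.inr j)) with hSBdef
  set SC := ∑ i : Fin q, ∑ j : Fin p, Complex.normSq (γ (Sum.inr i) (Sum.inl j)) with hSCdef
  set SD := ∑ i : Fin q, ∑ j : Fin q, Complex.normSq (γ (Sum.inr i) (Sum.inr j)) with hSDdef
  have hCA : SA - SC = (p : ℝ) := by
    have h := Finset.sum_congr rfl (fun j (_ : j ∈ (Finset.univ : Finset (Fin p))) => hcol_l j)
    rw [Finset.sum_sub_distrib] at h
    have e1 : (∑ j : Fin p, ∑ i : Fin p, Complex.normSq (γ (Sum.inl i) (Sum.inl j))) = SA :=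
      Finset.sum_comm
    have e2 : (∑ j : Fin p, ∑ i : Fin q, Complex.normSq (γ (Sum.inr i) (Sum.inl j))) = SC :=
      Finset.sum_comm
    rw [e1, e2] at h
    simpa using h
  have hRA : SA - SB = (p : ℝ) := by
    have h := Finset.sum_congr rfl (fun i (_ : i ∈ (Finset.univ : Finset (Fin p))) => hrow_l i)
    rw [Finset.sum_sub_distrib] at h
    simpa using h
  have hCB : SB - SD = -(q : ℝ) := by
    have h := Finset.sum_congr rfl (fun j (_ : j ∈ (Finset.univ : Finset (Fin q))) => hcol_r j)
    rw [Finset.sum_sub_distrib] at h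
    have e1 : (∑ j : Fin q, ∑ i : Fin p, Complex.normSq (γ (Sum.inl i) (Sum.inr j))) = SB :=
      Finset.sum_comm
    have e2 : (∑ j : Fin q, ∑ i : Fin q, Complex.normSq (γ (Sum.inr i) (Sum.inr j))) = SD :=
      Finset.sum_comm
    rw [e1, e2] at h
    simpa using h
  have hBC : SB = SC := by linarith
  have hTsplit : aux.frob γ = SA + SB + SC + SD := by
    unfold aux.frob
    rw [Fintype.sum_sum_type]
    have e1 : ∀ i : Fin p, (∑ v0, Complex.normSq (γ (Sum.inl i) v0))
        = (∑ j : Fin p, Complex.normSq (γ (Sum.inl i) (Sum.inl j)))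
          + ∑ j : Fin q, Complex.normSq (γ (Sum.inl i) (Sum.inr j)) :=
      fun i => Fintype.sum_sum_type _
    have e2 : ∀ i : Fin q, (∑ v0, Complex.normSq (γ (Sum.inr i) v0))
        = (∑ j : Fin p, Complex.normSq (γ (Sum.inr i) (Sum.inl j)))
          + ∑ j : Fin q, Complex.normSq (γ (Sum.inr i) (Sum.inr j)) :=
      fun i => Fintype.sum_sum_type _
    rw [Finset.sum_congr rfl (fun i (_ : i ∈ (Finset.univ : Finset (Fin p))) => e1 i),
      Finset.sum_congr rfl (fun i (_ : i ∈ (Finset.univ : Finset (Fin q))) => e2 i),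
      Finset.sum_add_distrib, Finset.sum_add_distrib]
    ring
  have hSBlt : SB < (N : ℝ) ^ 2 := by
    have h1 : SA + SB + SC + SD < (p : ℝ) + q + 4 * (N : ℝ) ^ 2 := by
      rw [← hTsplit]; linarith [hfrobbound]
    have hsig : SA - SB - SC + SD = (p : ℝ) + q := by linarith
    linarith
  have hSClt : SC < (N : ℝ) ^ 2 := by rw [← hBC]; exact hSBlt
  have hN9 : (1 : ℝ) < (N : ℝ) ^ 2 := by
    have h1 : (3 : ℝ) ≤ (N : ℝ) := by exact_mod_cast hN
    nlinarith
  -- entries in the off-diagonal blocks are zero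
  have hBzero : ∀ (i : Fin p) (j : Fin q), γ (Sum.inl i) (Sum.inr j) = 0 := by
    intro i j
    obtain ⟨α, β, hαβ⟩ := hent (Sum.inl i) (Sum.inr j)
    rw [Matrix.one_apply_ne (by simp), sub_zero] at hαβ
    have hval : Complex.normSq (γ (Sum.inl i) (Sum.inr j))
        = (N : ℝ) ^ 2 * ((α : ℝ) ^ 2 + (β : ℝ) ^ 2) := by
      rw [hαβ]
      have hrw : ((N : ℂ) * ((α : ℂ) + (β : ℂ) * Complex.I))
          = (((N : ℝ) : ℂ)) * ((((α : ℝ)) : ℂ) + (((β : ℝ)) : ℂ) * Complex.I) := by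
        push_cast; ring
      rw [hrw, Complex.normSq_mul, Complex.normSq_ofReal, Complex.normSq_add_mul_I]
      ring
    have hle : Complex.normSq (γ (Sum.inl i) (Sum.inr j)) ≤ SB := by
      calc Complex.normSq (γ (Sum.inl i) (Sum.inr j))
          ≤ ∑ j' : Fin q, Complex.normSq (γ (Sum.inl i) (Sum.inr j')) :=
            Finset.single_le_sum (f := fun j' => Complex.normSq (γ (Sum.inl i) (Sum.inr j')))
              (fun _ _ => Complex.normSq_nonneg _) (Finset.mem_univ j)
        _ ≤ SB :=
            Finset.single_le_sum
              (f := fun i' => ∑ j' : Fin q, Complex.normSq (γ (Sum.inl i') (Sum.inr j')))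
              (fun _ _ => Finset.sum_nonneg fun _ _ => Complex.normSq_nonneg _)
              (Finset.mem_univ i)
    have hlt : (N : ℝ) ^ 2 * ((α : ℝ) ^ 2 + (β : ℝ) ^ 2) < (N : ℝ) ^ 2 := by
      rw [← hval]; exact lt_of_le_of_lt hle hSBlt
    obtain ⟨hα, hβ⟩ := aux.int_small hN hlt
    rw [hαβ, hα, hβ]
    simp
  have hCzero : ∀ (i : Fin q) (j : Fin p), γ (Sum.inr i) (Sum.inl j) = 0 := by
    intro i j
    obtain ⟨α, β, hαβ⟩ := hent (Sum.inr i) (Sum.inl j)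
    rw [Matrix.one_apply_ne (by simp), sub_zero] at hαβ
    have hval : Complex.normSq (γ (Sum.inr i) (Sum.inl j))
        = (N : ℝ) ^ 2 * ((α : ℝ) ^ 2 + (β : ℝ) ^ 2) := by
      rw [hαβ]
      have hrw : ((N : ℂ) * ((α : ℂ) + (β : ℂ) * Complex.I))
          = (((N : ℝ) : ℂ)) * ((((α : ℝ)) : ℂ) + (((β : ℝ)) : ℂ) * Complex.I) := by
        push_cast; ring
      rw [hrw, Complex.normSq_mul, Complex.normSq_ofReal, Complex.normSq_add_mul_I]
      ring
    have hle : Complex.normSq (γ (Sum.inr i) (Sum.inl j)) ≤ SC := by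
      calc Complex.normSq (γ (Sum.inr i) (Sum.inl j))
          ≤ ∑ j' : Fin p, Complex.normSq (γ (Sum.inr i) (Sum.inl j')) :=
            Finset.single_le_sum (f := fun j' => Complex.normSq (γ (Sum.inr i) (Sum.inl j')))
              (fun _ _ => Complex.normSq_nonneg _) (Finset.mem_univ j)
        _ ≤ SC :=
            Finset.single_le_sum
              (f := fun i' => ∑ j' : Fin p, Complex.normSq (γ (Sum.inr i') (Sum.inl j')))
              (fun _ _ => Finset.sum_nonneg fun _ _ => Complex.normSq_nonneg _)
              (Finset.mem_univ i)
    have hlt : (N : ℝ) ^ 2 * ((α : ℝ) ^ 2 + (β : ℝ) ^ 2) < (N : ℝ) ^ 2 := by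
      rw [← hval]; exact lt_of_le_of_lt hle hSClt
    obtain ⟨hα, hβ⟩ := aux.int_small hN hlt
    rw [hαβ, hα, hβ]
    simp
  -- diagonal blocks
  have hAcol : ∀ j : Fin p, (∑ i : Fin p, Complex.normSq (γ (Sum.inl i) (Sum.inl j))) = 1 := by
    intro j
    have h := hcol_l j
    have h0 : (∑ i : Fin q, Complex.normSq (γ (Sum.inr i) (Sum.inl j))) = 0 :=
      Finset.sum_eq_zero fun i _ => by rw [hCzero]; simp
    linarith
  have hDcol : ∀ j : Fin q, (∑ i : Fin q, Complex.normSq (γ (Sum.inr i) (Sum.inr j))) = 1 := by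
    intro j
    have h := hcol_r j
    have h0 : (∑ i : Fin p, Complex.normSq (γ (Sum.inl i) (Sum.inr j))) = 0 :=
      Finset.sum_eq_zero fun i _ => by rw [hBzero]; simp
    linarith
  have hAoff : ∀ i j : Fin p, i ≠ j → γ (Sum.inl i) (Sum.inl j) = 0 := by
    intro i j hij
    obtain ⟨α, β, hαβ⟩ := hent (Sum.inl i) (Sum.inl j)
    rw [Matrix.one_apply_ne (by simpa using hij), sub_zero] at hαβ
    have hval : Complex.normSq (γ (Sum.inl i) (Sum.inl j))
        = (N : ℝ) ^ 2 * ((α : ℝ) ^ 2 + (β : ℝ) ^ 2) := by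
      rw [hαβ]
      have hrw : ((N : ℂ) * ((α : ℂ) + (β : ℂ) * Complex.I))
          = (((N : ℝ) : ℂ)) * ((((α : ℝ)) : ℂ) + (((β : ℝ)) : ℂ) * Complex.I) := by
        push_cast; ring
      rw [hrw, Complex.normSq_mul, Complex.normSq_ofReal, Complex.normSq_add_mul_I]
      ring
    have hle : Complex.normSq (γ (Sum.inl i) (Sum.inl j)) ≤ 1 := by
      rw [← hAcol j]
      exact Finset.single_le_sum (f := fun i' => Complex.normSq (γ (Sum.inl i') (Sum.inl j)))
        (fun _ _ => Complex.normSq_nonneg _) (Finset.mem_univ i)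
    have hlt : (N : ℝ) ^ 2 * ((α : ℝ) ^ 2 + (β : ℝ) ^ 2) < (N : ℝ) ^ 2 := by
      rw [← hval]; exact lt_of_le_of_lt hle hN9
    obtain ⟨hα, hβ⟩ := aux.int_small hN hlt
    rw [hαβ, hα, hβ]
    simp
  have hDoff : ∀ i j : Fin q, i ≠ j → γ (Sum.inr i) (Sum.inr j) = 0 := by
    intro i j hij
    obtain ⟨α, β, hαβ⟩ := hent (Sum.inr i) (Sum.inr j)
    rw [Matrix.one_apply_ne (by simpa using hij), sub_zero] at hαβ
    have hval : Complex.normSq (γ (Sum.inr i) (Sum.inr j))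
        = (N : ℝ) ^ 2 * ((α : ℝ) ^ 2 + (β : ℝ) ^ 2) := by
      rw [hαβ]
      have hrw : ((N : ℂ) * ((α : ℂ) + (β : ℂ) * Complex.I))
          = (((N : ℝ) : ℂ)) * ((((α : ℝ)) : ℂ) + (((β : ℝ)) : ℂ) * Complex.I) := by
        push_cast; ring
      rw [hrw, Complex.normSq_mul, Complex.normSq_ofReal, Complex.normSq_add_mul_I]
      ring
    have hle : Complex.normSq (γ (Sum.inr i) (Sum.inr j)) ≤ 1 := by
      rw [← hDcol j]
      exact Finset.single_le_sum (f := fun i' => Complex.normSq (γ (Sum.inr i') (Sum.inr j)))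
        (fun _ _ => Complex.normSq_nonneg _) (Finset.mem_univ i)
    have hlt : (N : ℝ) ^ 2 * ((α : ℝ) ^ 2 + (β : ℝ) ^ 2) < (N : ℝ) ^ 2 := by
      rw [← hval]; exact lt_of_le_of_lt hle hN9
    obtain ⟨hα, hβ⟩ := aux.int_small hN hlt
    rw [hαβ, hα, hβ]
    simp
  have hAdiag : ∀ j : Fin p, γ (Sum.inl j) (Sum.inl j) = 1 := by
    intro j
    have hsum := hAcol j
    have hsum2 : Complex.normSq (γ (Sum.inl j) (Sum.inl j)) = 1 := by
      rw [← hsum]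
      symm
      exact Finset.sum_eq_single j
        (fun i _ hij => by rw [hAoff i j hij]; simp)
        (fun h => absurd (Finset.mem_univ j) h)
    obtain ⟨α, β, hαβ⟩ := hent (Sum.inl j) (Sum.inl j)
    rw [Matrix.one_apply_eq] at hαβ
    have hform : γ (Sum.inl j) (Sum.inl j) = 1 + (N : ℂ) * ((α : ℂ) + (β : ℂ) * Complex.I) := by
      linear_combination hαβ
    have hval : Complex.normSq (γ (Sum.inl j) (Sum.inl j))
        = (1 + (N : ℝ) * (α : ℝ)) ^ 2 + ((N : ℝ) * (β : ℝ)) ^ 2 := by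
      rw [hform]
      have hrw : (1 + (N : ℂ) * ((α : ℂ) + (β : ℂ) * Complex.I))
          = (((1 + (N : ℝ) * (α : ℝ) : ℝ)) : ℂ) + ((((N : ℝ) * (β : ℝ) : ℝ)) : ℂ) * Complex.I := by
        push_cast; ring
      rw [hrw, Complex.normSq_add_mul_I]
    rw [hval] at hsum2
    have hint : (1 + (N : ℤ) * α) ^ 2 + ((N : ℤ) * β) ^ 2 = 1 := by exact_mod_cast hsum2
    obtain ⟨hα, hβ⟩ := aux.int_diag hN hint
    rw [hform, hα, hβ]
    simp
  have hDdiag : ∀ j : Fin q, γ (Sum.inr j) (Sum.inr j) = 1 := by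
    intro j
    have hsum := hDcol j
    have hsum2 : Complex.normSq (γ (Sum.inr j) (Sum.inr j)) = 1 := by
      rw [← hsum]
      symm
      exact Finset.sum_eq_single j
        (fun i _ hij => by rw [hDoff i j hij]; simp)
        (fun h => absurd (Finset.mem_univ j) h)
    obtain ⟨α, β, hαβ⟩ := hent (Sum.inr j) (Sum.inr j)
    rw [Matrix.one_apply_eq] at hαβ
    have hform : γ (Sum.inr j) (Sum.inr j) = 1 + (N : ℂ) * ((α : ℂ) + (β : ℂ) * Complex.I) := by
      linear_combination hαβ
    have hval : Complex.normSq (γ (Sum.inr j) (Sum.inr j))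
        = (1 + (N : ℝ) * (α : ℝ)) ^ 2 + ((N : ℝ) * (β : ℝ)) ^ 2 := by
      rw [hform]
      have hrw : (1 + (N : ℂ) * ((α : ℂ) + (β : ℂ) * Complex.I))
          = (((1 + (N : ℝ) * (α : ℝ) : ℝ)) : ℂ) + ((((N : ℝ) * (β : ℝ) : ℝ)) : ℂ) * Complex.I := by
        push_cast; ring
      rw [hrw, Complex.normSq_add_mul_I]
    rw [hval] at hsum2
    have hint : (1 + (N : ℤ) * α) ^ 2 + ((N : ℤ) * β) ^ 2 = 1 := by exact_mod_cast hsum2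
    obtain ⟨hα, hβ⟩ := aux.int_diag hN hint
    rw [hform, hα, hβ]
    simp
  -- conclusion
  ext u v0
  rcases u with i | i <;> rcases v0 with j | j
  · by_cases h : i = j
    · subst h; rw [hAdiag, Matrix.one_apply_eq]
    · rw [hAoff i j h, Matrix.one_apply_ne (by simpa using h)]
  · rw [hBzero, Matrix.one_apply_ne (by simp)]
  · rw [hCzero, Matrix.one_apply_ne (by simp)]
  · by_cases h : i = j
    · subst h; rw [hDdiag, Matrix.one_apply_eq]
    · rw [hDoff i j h, Matrix.one_apply_ne (by simpa using h)]
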